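/- arXiv:math/0006109 — 4 statements merged into one kernel-verified Lean document; each statement's English description precedes it below -/
import Mathlib

section
/- Let a : ℝ × (0,∞) → ℝ be bounded and measurable, satisfying the one-sided Lipschitz condition a(x₂, t) - a(x₁, t) ≤ C·(x₂ - x₁) for all x₁ ≤ x₂ and t ∈ [t̄, T], where C = C(t̄) ≥ 0. Then any two Filippov solutions y, z of the differential inclusion y'(t) ∈ [a(y(t)+, t), a(y(t)-, t)] with y(t̄) = z(t̄) coincide on [t̄, T]: forward generalized characteristics are unique. -/
/-!
Let `w = z - y`. If `w` became positive, go back to the last time `τ` at which it vanished.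
On the interval after `τ` the Filippov inclusions and the one-sided Lipschitz condition give
`w' ≤ a₋(z) - a₊(y) ≤ C w`, so `w t ≤ C ∫_τ^t w`, and Grönwall's inequality forces `w = 0`
there. Exchanging `y` and `z` gives equality.
-/

open MeasureTheory intervalIntegral Set Filter Topology

theorem sub_le_mul_of_tendsto_nhdsLT_of_tendsto_nhdsGT {f : ℝ → ℝ} {C x₁ x₂ l r : ℝ}
    (hf : ∀ ξ η, ξ ≤ η → f η - f ξ ≤ C * (η - ξ))
    (hl : Tendsto f (𝓝[<] x₂) (𝓝 l)) (hr : Tendsto f (𝓝[>] x₁) (𝓝 r)) (h : x₁ < x₂) :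
    l - r ≤ C * (x₂ - x₁) := by
  have left_limit : ∀ η ∈ Ioo x₁ x₂, l - f η ≤ C * (x₂ - η) := fun η hη =>
    le_of_tendsto_of_tendsto (hl.sub_const (f η))
      (((show Continuous fun ξ => C * (ξ - η) by fun_prop).tendsto x₂).mono_left nhdsWithin_le_nhds)
      (by filter_upwards [Ioo_mem_nhdsLT hη.2] with ξ hξ using hf η ξ hξ.1.le)
  exact le_of_tendsto_of_tendsto (hr.const_sub l)
    (((show Continuous fun η => C * (x₂ - η) by fun_prop).tendsto x₁).mono_left nhdsWithin_le_nhds)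
    (by filter_upwards [Ioo_mem_nhdsGT h] using left_limit)

theorem exists_eq_zero_forall_pos_of_continuousOn {w : ℝ → ℝ} {a b : ℝ} (hab : a ≤ b)
    (hw : ContinuousOn w (Icc a b)) (ha : w a ≤ 0) (hb : 0 < w b) :
    ∃ τ ∈ Ico a b, w τ = 0 ∧ ∀ s ∈ Ioc τ b, 0 < w s := by
  set S := Icc a b ∩ w ⁻¹' Iic 0
  have hS : IsClosed S := hw.preimage_isClosed_of_isClosed isClosed_Icc isClosed_Iic
  have hSne : S.Nonempty := ⟨a, ⟨left_mem_Icc.2 hab, ha⟩⟩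
  have hSbdd : BddAbove S := ⟨b, fun s hs => hs.1.2⟩
  obtain ⟨⟨hτa, hτb⟩, hτ : w (sSup S) ≤ 0⟩ := hS.csSup_mem hSne hSbdd
  have hτlt : sSup S < b := lt_of_le_of_ne hτb fun h => by rw [h] at hτ; linarith
  have hpos : ∀ s ∈ Ioc (sSup S) b, 0 < w s := fun s hs => by
    by_contra! hs'
    exact (le_csSup hSbdd ⟨⟨hτa.trans hs.1.le, hs.2⟩, hs'⟩).not_gt hs.1
  refine ⟨sSup S, ⟨hτa, hτlt⟩, le_antisymm hτ ?_, hpos⟩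
  have hmem : Icc a b ∈ 𝓝[>] sSup S := Icc_mem_nhdsGT_of_mem ⟨hτa, hτlt⟩
  refine ge_of_tendsto ((hw _ ⟨hτa, hτb⟩).mono_of_mem_nhdsWithin hmem) ?_
  filter_upwards [Ioc_mem_nhdsGT hτlt] with s hs using (hpos s hs).le

theorem eq_zero_of_le_mul_integral {w : ℝ → ℝ} {a b C : ℝ} (hw : ContinuousOn w (Icc a b))
    (hw0 : ∀ t ∈ Icc a b, 0 ≤ w t) (hle : ∀ t ∈ Icc a b, w t ≤ C * ∫ s in a..t, w s) :
    ∀ t ∈ Icc a b, w t = 0 := by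
  intro t ht
  have hab : a ≤ b := ht.1.trans ht.2
  have hint : ∀ t ∈ Icc a b, IntervalIntegrable w volume a t := fun t ht =>
    (hw.mono (Icc_subset_Icc_right ht.2)).intervalIntegrable_of_Icc ht.1
  have hF0 : ∀ t ∈ Icc a b, 0 ≤ ∫ s in a..t, w s := fun t ht =>
    integral_nonneg ht.1 fun s hs => hw0 s ⟨hs.1, hs.2.trans ht.2⟩
  have hFcont : ContinuousOn (fun t => ∫ s in a..t, w s) (Icc a b) := by
    simpa only [uIcc_of_le hab] using
      continuousOn_primitive_interval' (hint b (right_mem_Icc.2 hab)) left_mem_uIcc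
  have hFderiv : ∀ x ∈ Ico a b,
      HasDerivWithinAt (fun t => ∫ s in a..t, w s) (w x) (Ici x) x := fun x hx => by
    have hmem : Icc a b ∈ 𝓝[>] x := Icc_mem_nhdsGT_of_mem hx
    exact integral_hasDerivWithinAt_right (hint x (Ico_subset_Icc_self hx))
      ((hw.stronglyMeasurableAtFilter_nhdsWithin measurableSet_Icc x).filter_mono
        (nhdsWithin_le_of_mem hmem))
      ((hw x (Ico_subset_Icc_self hx)).mono_of_mem_nhdsWithin hmem)
  have hF : (∫ s in a..t, w s) = 0 :=
    eq_zero_of_abs_deriv_le_mul_abs_self_of_eq_zero_right hFcont hFderiv integral_same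
      (fun x hx => by
        rw [Real.norm_of_nonneg (hw0 x (Ico_subset_Icc_self hx)),
          Real.norm_of_nonneg (hF0 x (Ico_subset_Icc_self hx))]
        exact hle x (Ico_subset_Icc_self hx)) t ht
  exact le_antisymm (by simpa [hF] using hle t ht) (hw0 t ht)

section AbsolutelyContinuous

variable {f f' : ℝ → ℝ} {a b : ℝ}

theorem continuousOn_of_eq_add_integral (hf' : IntervalIntegrable f' volume a b)
    (hrep : ∀ t ∈ Icc a b, f t = f a + ∫ s in a..t, f' s) : ContinuousOn f (Icc a b) :=
  (continuousOn_const.add ((continuousOn_primitive_interval' hf' left_mem_uIcc).mono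
    Icc_subset_uIcc)).congr hrep

theorem sub_eq_integral_of_eq_add_integral (hf' : IntervalIntegrable f' volume a b)
    (hrep : ∀ t ∈ Icc a b, f t = f a + ∫ s in a..t, f' s) {u t : ℝ} (hu : u ∈ Icc a b)
    (ht : t ∈ Icc a b) : f t - f u = ∫ s in u..t, f' s := by
  have hint : ∀ x ∈ Icc a b, IntervalIntegrable f' volume a x := fun x hx =>
    hf'.mono_set (uIcc_subset_uIcc left_mem_uIcc (Icc_subset_uIcc hx))
  rw [hrep t ht, hrep u hu, add_sub_add_left_eq_sub,
    integral_interval_sub_left (hint t ht) (hint u hu)]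

end AbsolutelyContinuous

theorem nonpos_of_ae_deriv_le_mul {w w' : ℝ → ℝ} {a b C : ℝ}
    (hw' : IntervalIntegrable w' volume a b)
    (hrep : ∀ t ∈ Icc a b, w t = w a + ∫ s in a..t, w' s) (ha : w a ≤ 0)
    (hineq : ∀ᵐ s ∂(volume.restrict (Icc a b)), 0 < w s → w' s ≤ C * w s) :
    ∀ t ∈ Icc a b, w t ≤ 0 := by
  intro t₀ ht₀
  by_contra! hpos
  have hw := continuousOn_of_eq_add_integral hw' hrep
  obtain ⟨τ, hτ, hwτ, hposτ⟩ := exists_eq_zero_forall_pos_of_continuousOn ht₀.1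
    (hw.mono (Icc_subset_Icc_right ht₀.2)) ha hpos
  have hsub : Icc τ t₀ ⊆ Icc a b := Icc_subset_Icc hτ.1 ht₀.2
  have hw0 : ∀ s ∈ Icc τ t₀, 0 ≤ w s := fun s hs => by
    rcases hs.1.eq_or_lt with rfl | hτs
    · exact hwτ.ge
    · exact (hposτ s ⟨hτs, hs.2⟩).le
  have hle : ∀ t ∈ Icc τ t₀, w t ≤ C * ∫ s in τ..t, w s := fun t ht => by
    have hτt : Icc τ t ⊆ Icc a b := (Icc_subset_Icc_right ht.2).trans hsub
    calc w t = ∫ s in Ioc τ t, w' s := by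
          rw [← integral_of_le ht.1, ← sub_eq_integral_of_eq_add_integral hw' hrep
            (hτt (left_mem_Icc.2 ht.1)) (hτt (right_mem_Icc.2 ht.1)), hwτ, sub_zero]
      _ ≤ ∫ s in Ioc τ t, C * w s := by
          refine setIntegral_mono_ae_restrict ?_ ?_ ?_
          · exact (hw'.mono_set (uIcc_subset_uIcc
              (Icc_subset_uIcc (hτt (left_mem_Icc.2 ht.1)))
              (Icc_subset_uIcc (hτt (right_mem_Icc.2 ht.1))))).1
          · exact ((hw.mono hτt).integrableOn_Icc.mono_set Ioc_subset_Icc_self).const_mul C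
          · filter_upwards [ae_restrict_of_ae_restrict_of_subset
              (Ioc_subset_Icc_self.trans hτt) hineq, ae_restrict_mem measurableSet_Ioc]
              with s hs hsIoc
            exact hs (hposτ s ⟨hsIoc.1, hsIoc.2.trans ht.2⟩)
      _ = C * ∫ s in τ..t, w s := by
          rw [MeasureTheory.integral_const_mul, integral_of_le ht.1]
  have := eq_zero_of_le_mul_integral (hw.mono hsub) hw0 hle t₀ (right_mem_Icc.2 hτ.2.le)
  linarith

theorem le_of_filippov_super_sub {aMinus aPlus : ℝ → ℝ → ℝ} {a b C : ℝ}
    (hjump : ∀ x₁ x₂ t, x₁ < x₂ → t ∈ Icc a b → aMinus x₂ t - aPlus x₁ t ≤ C * (x₂ - x₁))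
    {y z y' z' : ℝ → ℝ} (hy' : IntervalIntegrable y' volume a b)
    (hz' : IntervalIntegrable z' volume a b)
    (hyrep : ∀ t ∈ Icc a b, y t = y a + ∫ s in a..t, y' s)
    (hzrep : ∀ t ∈ Icc a b, z t = z a + ∫ s in a..t, z' s)
    (hySuper : ∀ᵐ s ∂(volume.restrict (Icc a b)), aPlus (y s) s ≤ y' s)
    (hzSub : ∀ᵐ s ∂(volume.restrict (Icc a b)), z' s ≤ aMinus (z s) s)
    (hinit : z a ≤ y a) :
    ∀ t ∈ Icc a b, z t ≤ y t := by
  have hrep : ∀ t ∈ Icc a b, z t - y t = (z a - y a) + ∫ s in a..t, (z' s - y' s) := by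
    intro t ht
    have hsub : uIcc a t ⊆ uIcc a b := uIcc_subset_uIcc left_mem_uIcc (Icc_subset_uIcc ht)
    rw [integral_sub (hz'.mono_set hsub) (hy'.mono_set hsub), hzrep t ht, hyrep t ht]
    ring
  have hineq : ∀ᵐ s ∂(volume.restrict (Icc a b)),
      0 < z s - y s → z' s - y' s ≤ C * (z s - y s) := by
    filter_upwards [hySuper, hzSub, ae_restrict_mem measurableSet_Icc] with s hys hzs hs hpos
    linarith [hjump (y s) (z s) s (sub_pos.1 hpos) hs]
  intro t ht
  exact sub_nonpos.1 (nonpos_of_ae_deriv_le_mul (hz'.sub hy') hrep (sub_nonpos.2 hinit) hineq t ht)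

theorem stmt9_general (a aMinus aPlus : ℝ → ℝ → ℝ) (tbar T C : ℝ)
    (hOSL : ∀ x₁ x₂ t, x₁ ≤ x₂ → t ∈ Set.Icc tbar T →
      a x₂ t - a x₁ t ≤ C * (x₂ - x₁))
    (hMinusLim : ∀ x t, Filter.Tendsto (fun ξ => a ξ t)
      (nhdsWithin x (Set.Iio x)) (nhds (aMinus x t)))
    (hPlusLim : ∀ x t, Filter.Tendsto (fun ξ => a ξ t)
      (nhdsWithin x (Set.Ioi x)) (nhds (aPlus x t)))
    (y z y' z' : ℝ → ℝ)
    (hy'int : IntervalIntegrable y' volume tbar T)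
    (hz'int : IntervalIntegrable z' volume tbar T)
    (hyrep : ∀ t ∈ Set.Icc tbar T, y t = y tbar + ∫ s in tbar..t, y' s)
    (hzrep : ∀ t ∈ Set.Icc tbar T, z t = z tbar + ∫ s in tbar..t, z' s)
    (hyFil : ∀ᵐ s ∂(volume.restrict (Set.Icc tbar T)),
      aPlus (y s) s ≤ y' s ∧ y' s ≤ aMinus (y s) s)
    (hzFil : ∀ᵐ s ∂(volume.restrict (Set.Icc tbar T)),
      aPlus (z s) s ≤ z' s ∧ z' s ≤ aMinus (z s) s)
    (hinit : y tbar = z tbar) :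
    ∀ t ∈ Set.Icc tbar T, y t = z t := by
  have hjump : ∀ x₁ x₂ t, x₁ < x₂ → t ∈ Icc tbar T →
      aMinus x₂ t - aPlus x₁ t ≤ C * (x₂ - x₁) := fun x₁ x₂ t h ht =>
    sub_le_mul_of_tendsto_nhdsLT_of_tendsto_nhdsGT (fun ξ η hξη => hOSL ξ η t hξη ht)
      (hMinusLim x₂ t) (hPlusLim x₁ t) h
  intro t ht
  exact le_antisymm
    (le_of_filippov_super_sub hjump hz'int hy'int hzrep hyrep (hzFil.mono fun _ h => h.1)
      (hyFil.mono fun _ h => h.2) hinit.le t ht)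
    (le_of_filippov_super_sub hjump hy'int hz'int hyrep hzrep (hyFil.mono fun _ h => h.1)
      (hzFil.mono fun _ h => h.2) hinit.ge t ht)

/-- Proposition 4.4: under a one-sided Lipschitz condition on the
coefficient `a`, forward Filippov (generalized) characteristics are unique:
two Filippov solutions with the same value at `t̄` coincide on `[t̄, T]`. -/
theorem stmt9 (a aMinus aPlus : ℝ → ℝ → ℝ) (tbar T C K : ℝ)
    (htT : tbar ≤ T) (hC : 0 ≤ C)
    (hbdd : ∀ x t, |a x t| ≤ K)
    (hOSL : ∀ x₁ x₂ t, x₁ ≤ x₂ → t ∈ Set.Icc tbar T →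
      a x₂ t - a x₁ t ≤ C * (x₂ - x₁))
    (hMinusLim : ∀ x t, Filter.Tendsto (fun ξ => a ξ t)
      (nhdsWithin x (Set.Iio x)) (nhds (aMinus x t)))
    (hPlusLim : ∀ x t, Filter.Tendsto (fun ξ => a ξ t)
      (nhdsWithin x (Set.Ioi x)) (nhds (aPlus x t)))
    (y z y' z' : ℝ → ℝ)
    (hy'int : IntervalIntegrable y' volume tbar T)
    (hz'int : IntervalIntegrable z' volume tbar T)
    (hyrep : ∀ t ∈ Set.Icc tbar T, y t = y tbar + ∫ s in tbar..t, y' s)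
    (hzrep : ∀ t ∈ Set.Icc tbar T, z t = z tbar + ∫ s in tbar..t, z' s)
    (hyFil : ∀ᵐ s ∂(volume.restrict (Set.Icc tbar T)),
      aPlus (y s) s ≤ y' s ∧ y' s ≤ aMinus (y s) s)
    (hzFil : ∀ᵐ s ∂(volume.restrict (Set.Icc tbar T)),
      aPlus (z s) s ≤ z' s ∧ z' s ≤ aMinus (z s) s)
    (hinit : y tbar = z tbar) :
    ∀ t ∈ Set.Icc tbar T, y t = z t :=
  stmt9_general a aMinus aPlus tbar T C hOSL hMinusLim hPlusLim y z y' z' hy'int hz'int hyrep hzrep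
    hyFil hzFil hinit
end

section
/- In the setting of the preceding identity, suppose additionally that every discontinuity of a is of Lax or undercompressive type (no rarefaction-shocks): at each jump, either a⁻ > λ > a⁺, or λ ≤ min(a⁻, a⁺), or λ ≥ max(a⁻, a⁺). Then d/dt ∫_ℝ |ψ(x,t)| dx ≤ 0; that is, the L¹ norm of piecewise constant solutions of ∂ₜψ + ∂ₓ(aψ) = 0 is nonincreasing in time (away from interaction times). -/
open MeasureTheory

/-- in the setting of identity (2.6), if every discontinuity is of
Lax or undercompressive type (no rarefaction-shocks), then the `L¹` norm of the
piecewise constant solution is nonincreasing: `d/dt ∫|ψ| = D ≤ 0`. -/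
theorem stmt13 (mJ : ℕ) (t D : ℝ)
    (ψ : ℝ → ℝ → ℝ)
    (lam ψp ψm ap am : Fin mJ → ℝ)
    (hint : ∀ s : ℝ, Integrable (fun y => ψ y s) volume)
    (hRH : ∀ j, (ap j - lam j) * ψp j = (am j - lam j) * ψm j)
    (hψpsign : ∀ j : Fin mJ, 0 ≤ (-1 : ℝ) ^ (j : ℕ) * ψp j)
    (hψmsign : ∀ j : Fin mJ, (-1 : ℝ) ^ (j : ℕ) * ψm j ≤ 0)
    (hclass : ∀ j, (am j > lam j ∧ lam j > ap j) ∨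
      lam j ≤ min (am j) (ap j) ∨ max (am j) (ap j) ≤ lam j)
    (hD : HasDerivAt (fun s => ∫ y, |ψ y s|) D t)
    (hDval : D = 2 * ∑ j : Fin mJ, (-1 : ℝ) ^ (j : ℕ) * (ap j - lam j) * ψp j) :
    D ≤ 0 := by
  rw [hDval]
  have hterm : ∀ j : Fin mJ, (-1 : ℝ) ^ (j : ℕ) * (ap j - lam j) * ψp j ≤ 0 := by
    intro j
    have hp := hψpsign j
    have hm := hψmsign j
    have hre : (-1 : ℝ) ^ (j : ℕ) * (ap j - lam j) * ψp j
        = (ap j - lam j) * ((-1 : ℝ) ^ (j : ℕ) * ψp j) := by ring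
    rcases hclass j with ⟨_, hlt⟩ | hle | hge
    · rw [hre]
      exact mul_nonpos_of_nonpos_of_nonneg (by linarith) hp
    · have h1 : 0 ≤ ap j - lam j := by
        have := le_min_iff.mp hle; linarith [this.2]
      have h2 : 0 ≤ am j - lam j := by
        have := le_min_iff.mp hle; linarith [this.1]
      have hre2 : (-1 : ℝ) ^ (j : ℕ) * (ap j - lam j) * ψp j
          = (am j - lam j) * ((-1 : ℝ) ^ (j : ℕ) * ψm j) := by
        have := hRH j
        calc (-1 : ℝ) ^ (j : ℕ) * (ap j - lam j) * ψp j
            = (-1 : ℝ) ^ (j : ℕ) * ((ap j - lam j) * ψp j) := by ring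
          _ = (-1 : ℝ) ^ (j : ℕ) * ((am j - lam j) * ψm j) := by rw [this]
          _ = (am j - lam j) * ((-1 : ℝ) ^ (j : ℕ) * ψm j) := by ring
      rw [hre2]
      exact mul_nonpos_of_nonneg_of_nonpos h2 hm
    · have := max_le_iff.mp hge
      rw [hre]
      exact mul_nonpos_of_nonpos_of_nonneg (by linarith [this.2]) hp
  have hsum : ∑ j : Fin mJ, (-1 : ℝ) ^ (j : ℕ) * (ap j - lam j) * ψp j ≤ 0 :=
    Finset.sum_nonpos fun j _ => hterm j
  linarith
end

section
/- Let f be C² and strictly convex, u⁻ > u⁺ a shock of f with speed λ = a(u⁻, u⁺), and v ∈ ℝ. Define κ⁻ = v - u⁻ and κ⁺ = v - u⁺, and a_± = a(u_±, v) (with a(p,p) := f'(p)). Then sgn(a⁻ - λ) = sgn(κ⁺) and sgn(a⁺ - λ) = sgn(κ⁻). Consequently: the jump is Lax for the pair (i.e., a⁻ > λ > a⁺) iff κ⁺ > 0 > κ⁻, i.e. iff u⁺ < v < u⁻. -/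
open Set

/-- Auxiliary: for a strictly convex differentiable function, the "extended slope"
`g p v = deriv f p` if `v = p`, else `slope f p v`, is strictly monotone in `v`. -/
lemma stmt18_aux {f : ℝ → ℝ} (sc : StrictConvexOn ℝ univ f)
    (hd : Differentiable ℝ f) (p : ℝ) :
    StrictMono (fun v => if v = p then deriv f p else slope f p v) := by
  intro x y hxy
  dsimp only
  rcases eq_or_ne x p with rfl | hx
  · rw [if_pos rfl, if_neg (by exact fun hyp => lt_irrefl x (hyp ▸ hxy))]
    exact sc.deriv_lt_slope trivial trivial hxy (hd x)
  · rw [if_neg hx]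
    rcases eq_or_ne y p with rfl | hy
    · rw [if_pos rfl, slope_comm]
      exact sc.slope_lt_deriv trivial trivial hxy (hd y)
    · rw [if_neg hy]
      simpa only [slope_def_field] using
        sc.secant_strict_mono (trivial : p ∈ univ) trivial trivial hx hy hxy

/-- classification (2.10) with `κ = v - u`: at a shock `u⁻ > u⁺`
of a strictly convex flux with speed `λ = a(u⁻,u⁺)`, and any state `v`,
`sgn(a(u⁻,v) - λ) = sgn(v - u⁺)` and `sgn(a(u⁺,v) - λ) = sgn(v - u⁻)`;
consequently the jump is of Lax type iff `u⁺ < v < u⁻`. -/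
theorem stmt18 (f : ℝ → ℝ) (hf : ContDiff ℝ 2 f)
    (hconv : ∀ x, 0 < deriv (deriv f) x)
    (a : ℝ → ℝ → ℝ)
    (ha : ∀ p q, p ≠ q → a p q = (f q - f p) / (q - p))
    (hadiag : ∀ p, a p p = deriv f p)
    (um up v : ℝ) (h : up < um)
    (lam : ℝ) (hlam : lam = a um up)
    (κm κp : ℝ) (hκm : κm = v - um) (hκp : κp = v - up) :
    Real.sign (a um v - lam) = Real.sign κp ∧
    Real.sign (a up v - lam) = Real.sign κm ∧
    ((a um v > lam ∧ lam > a up v) ↔ (up < v ∧ v < um)) := by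
  have hd : Differentiable ℝ f := hf.differentiable (by norm_num)
  have sc : StrictConvexOn ℝ univ f := by
    apply strictConvexOn_univ_of_deriv2_pos hf.continuous
    intro x
    simpa [Function.iterate_succ, Function.iterate_zero] using hconv x
  -- identify `a` with the extended slope
  have key : ∀ p q : ℝ, a p q = (fun v => if v = p then deriv f p else slope f p v) q := by
    intro p q
    rcases eq_or_ne q p with rfl | hq
    · simp [hadiag]
    · rw [ha p q (Ne.symm hq)]
      simp [if_neg hq, slope_def_field]
  have hm := stmt18_aux sc hd um
  have hp := stmt18_aux sc hd up
  set gm := fun v => if v = um then deriv f um else slope f um v with hgm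
  set gp := fun v => if v = up then deriv f up else slope f up v with hgp
  have hlam1 : lam = gm up := by rw [hlam, key]
  have hlam2 : lam = gp um := by
    have h1 : up - um ≠ 0 := sub_ne_zero.mpr h.ne
    have h2 : um - up ≠ 0 := sub_ne_zero.mpr h.ne'
    rw [hlam, ha um up h.ne', hgp]
    simp only [if_neg h.ne', slope_def_field]
    rw [div_eq_div_iff h1 h2]
    ring
  have havm : a um v = gm v := key um v
  have havp : a up v = gp v := key up v
  have sign_eq : ∀ (g : ℝ → ℝ), StrictMono g → ∀ x y : ℝ,
      Real.sign (g x - g y) = Real.sign (x - y) := by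
    intro g hg x y
    rcases lt_trichotomy x y with hxy | hxy | hxy
    · rw [Real.sign_of_neg (sub_neg.mpr (hg hxy)), Real.sign_of_neg (sub_neg.mpr hxy)]
    · simp [hxy]
    · rw [Real.sign_of_pos (sub_pos.mpr (hg hxy)), Real.sign_of_pos (sub_pos.mpr hxy)]
  refine ⟨?_, ?_, ?_⟩
  · rw [havm, hlam1, hκp, sign_eq gm hm]
  · rw [havp, hlam2, hκm, sign_eq gp hp]
  · constructor
    · rintro ⟨h1, h2⟩
      rw [havm, hlam1] at h1
      rw [havp, hlam2] at h2
      exact ⟨hm.lt_iff_lt.mp h1, hp.lt_iff_lt.mp h2⟩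
    · rintro ⟨h1, h2⟩
      constructor
      · rw [havm, hlam1]; exact hm h1
      · rw [havp, hlam2]; exact hp h2
end

section
/- Let f be C² strictly convex, let u⁻ > u⁺ be a shock of f with speed λ, and let v be any real number. With a_± = a(u_±, v) as above, it is impossible that a⁻ < λ < a⁺. In other words, the averaged coefficient a(u, v) built from an entropy solution u (whose jumps satisfy u⁻ > u⁺) and any state v admits no rarefaction-shock discontinuity at jumps of u. -/
/-- observation (1.6): the averaged coefficient built from an
entropic shock `u⁻ > u⁺` of a strictly convex flux and any state `v` never
forms a rarefaction-shock: it is impossible that `a(u⁻,v) < λ < a(u⁺,v)`. -/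
theorem stmt19 (f : ℝ → ℝ) (hf : ContDiff ℝ 2 f)
    (hconv : ∀ x, 0 < deriv (deriv f) x)
    (a : ℝ → ℝ → ℝ)
    (ha : ∀ p q, p ≠ q → a p q = (f q - f p) / (q - p))
    (hadiag : ∀ p, a p p = deriv f p)
    (um up v : ℝ) (h : up < um)
    (lam : ℝ) (hlam : lam = a um up) :
    ¬ (a um v < lam ∧ lam < a up v) := by
  have hsc : StrictConvexOn ℝ Set.univ f :=
    strictConvexOn_univ_of_deriv2_pos hf.continuous hconv
  have hdiff : Differentiable ℝ f := hf.differentiable (by norm_num)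
  have hslope : ∀ p q : ℝ, p ≠ q → a p q = slope f p q := by
    intro p q hpq
    rw [ha p q hpq, slope_def_field, div_eq_div_iff (sub_ne_zero.2 (Ne.symm hpq))
      (sub_ne_zero.2 (Ne.symm hpq))]
  have hlam' : lam = slope f up um := by
    rw [hlam, hslope um up h.ne', slope_comm]
  rintro ⟨h1, h2⟩
  -- Case analysis on v
  rcases eq_or_ne v um with rfl | hvum
  · -- a v v = deriv f v, and slope f up v < deriv f v, so lam < a v v, contra h1
    have := hsc.slope_lt_deriv (Set.mem_univ up) (Set.mem_univ v) h (hdiff v)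
    rw [hadiag] at h1; linarith [hlam' ▸ this]
  rcases eq_or_ne v up with rfl | hvup
  · have := hsc.deriv_lt_slope (Set.mem_univ v) (Set.mem_univ um) h (hdiff v)
    rw [hadiag] at h2; linarith [hlam' ▸ this]
  -- now v ≠ um, v ≠ up
  have h1' : slope f um v < slope f um up := by
    rw [← hslope um v (Ne.symm hvum), ← hslope um up h.ne']
    rw [hlam] at h1; exact h1
  have h2' : slope f up um < slope f up v := by
    rw [← hslope up v (Ne.symm hvup), ← hslope up um h.ne, ha up um h.ne,
      ha up v (Ne.symm hvup)]
    rw [hlam, ha um up h.ne', ha up v (Ne.symm hvup),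
      show (f up - f um)/(up - um) = (f um - f up)/(um - up) by
        rw [← neg_div_neg_eq]; ring_nf] at h2
    exact h2
  -- strict monotonicity of secants: from h1', v < up; from h2', um < v
  have hv_lt_up : v < up := by
    by_contra hle
    push_neg at hle
    rcases lt_or_eq_of_le hle with hlt | heq
    · have := hsc.secant_strict_mono (Set.mem_univ um) (Set.mem_univ up)
        (Set.mem_univ v) h.ne hvum hlt
      simp_rw [← slope_def_field] at this
      linarith
    · exact hvup heq.symm
  have hum_lt_v : um < v := by
    by_contra hle
    push_neg at hle
    rcases lt_or_eq_of_le hle with hlt | heq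
    · have := hsc.secant_strict_mono (Set.mem_univ up) (Set.mem_univ v)
        (Set.mem_univ um) hvup h.ne' hlt
      simp_rw [← slope_def_field] at this
      linarith
    · exact hvum heq
  linarith
end
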